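/- arXiv:2109.06021 — 3 statements merged into one kernel-verified Lean document; each statement's English description precedes it below -/
import Mathlib

section
/- Let G be a connected interval graph of diameter d and maximum degree Δ. Then G has at most (d+1)·Δ + 1 vertices. In particular, an interval graph of diameter D has O(D·Δ) vertices. -/
/-!
Let `u` be the vertex whose interval starts leftmost and `v` the one whose interval ends
rightmost, and let `W` be a shortest `u`–`v` walk. Consecutive intervals along `W` overlap, so
their union covers `[l u, r v]`, which contains every interval of the graph. Hence every vertex
`w ≠ u` is adjacent to a vertex of `W`: either `w` lies on `W` after `u` (take its predecessor),
or the point `l w` lies in the interval of some vertex of `W`. So all vertices but `u` lie in the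
neighbourhoods of the at most `d + 1` vertices of `W`, each of size at most `Δ`.
-/

open Finset

namespace SimpleGraph

variable {V : Type*} {G : SimpleGraph V}

theorem Walk.exists_adj_mem_support_of_mem_support {a b w : V} (p : G.Walk a b)
    (hw : w ∈ p.support) (hwa : w ≠ a) : ∃ x ∈ p.support, G.Adj x w := by
  have hw' : w ∈ p.darts.map (·.snd) := by
    rw [p.map_snd_darts]
    exact ((p.mem_support_iff).1 hw).resolve_left hwa
  obtain ⟨e, he, rfl⟩ := List.mem_map.1 hw'
  exact ⟨e.fst, p.dart_fst_mem_support_of_mem_darts he, e.adj⟩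

theorem card_le_card_mul_add_one_of_forall_ne_exists_adj [Fintype V] [DecidableRel G.Adj]
    (S : Finset V) (u : V) (hS : ∀ w ≠ u, ∃ x ∈ S, G.Adj x w) {Δ : ℕ}
    (hdeg : ∀ v, G.degree v ≤ Δ) : Fintype.card V ≤ #S * Δ + 1 := by
  classical
  have hcover : (univ : Finset V) ⊆ insert u (S.biUnion fun x => G.neighborFinset x) := by
    intro w _
    by_cases hwu : w = u
    · exact hwu ▸ mem_insert_self w _
    · obtain ⟨x, hx, hxw⟩ := hS w hwu
      exact mem_insert_of_mem (mem_biUnion.2 ⟨x, hx, (G.mem_neighborFinset x w).2 hxw⟩)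
  calc Fintype.card V = #(univ : Finset V) := rfl
    _ ≤ #(insert u (S.biUnion fun x => G.neighborFinset x)) := card_le_card hcover
    _ ≤ #(S.biUnion fun x => G.neighborFinset x) + 1 := card_insert_le _ _
    _ ≤ #S * Δ + 1 := by
      gcongr
      exact card_biUnion_le_card_mul _ _ _ fun x _ =>
        (G.card_neighborFinset_eq_degree x).le.trans (hdeg x)

section IntervalModel

variable {l r : V → ℝ}

theorem Walk.exists_mem_support_mem_Icc (hadj : ∀ v w, G.Adj v w → l w ≤ r v) {a b : V}
    (p : G.Walk a b) {c : ℝ} (hac : l a ≤ c) (hcb : c ≤ r b) :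
    ∃ x ∈ p.support, c ∈ Set.Icc (l x) (r x) := by
  induction p with
  | nil => exact ⟨_, List.mem_singleton_self _, hac, hcb⟩
  | @cons x y z hxy p ih =>
    by_cases hyc : l y ≤ c
    · obtain ⟨t, ht, htc⟩ := ih hyc hcb
      exact ⟨t, List.mem_cons_of_mem _ ht, htc⟩
    · exact ⟨x, List.mem_cons_self, hac, (not_le.1 hyc).le.trans (hadj x y hxy)⟩

theorem Walk.exists_adj_mem_support_of_interval (hlr : ∀ v, l v ≤ r v)
    (hadj : ∀ v w, G.Adj v w ↔ v ≠ w ∧ l w ≤ r v ∧ l v ≤ r w)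
    {a b : V} (p : G.Walk a b) (ha : ∀ w, l a ≤ l w) (hb : ∀ w, r w ≤ r b)
    (w : V) (hwa : w ≠ a) :
    ∃ x ∈ p.support, G.Adj x w := by
  by_cases hw : w ∈ p.support
  · exact p.exists_adj_mem_support_of_mem_support hw hwa
  have hle : ∀ v w, G.Adj v w → l w ≤ r v := fun v w h => ((hadj v w).1 h).2.1
  obtain ⟨x, hx, hlx, hrx⟩ := p.exists_mem_support_mem_Icc hle (ha w) ((hlr w).trans (hb w))
  exact ⟨x, hx, (hadj x w).2 ⟨fun hxw => hw (hxw ▸ hx), hrx, hlx.trans (hlr w)⟩⟩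

end IntervalModel

end SimpleGraph

open SimpleGraph in
/-- A connected interval graph of diameter d and maximum degree Δ has at most
(d+1)·Δ + 1 vertices. -/
theorem interval_graph_card_le {V : Type*} [Fintype V] (G : SimpleGraph V)
    [DecidableRel G.Adj] (l r : V → ℝ) (hlr : ∀ v, l v ≤ r v)
    (hadj : ∀ v w, G.Adj v w ↔ v ≠ w ∧ l w ≤ r v ∧ l v ≤ r w)
    (hconn : G.Connected) (d Δ : ℕ)
    (hdiam : ∀ u v : V, G.dist u v ≤ d)
    (hdeg : ∀ v : V, G.degree v ≤ Δ) :
    Fintype.card V ≤ (d + 1) * Δ + 1 := by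
  classical
  obtain ⟨u, -, hu⟩ := exists_min_image univ l (univ_nonempty_iff.2 hconn.nonempty)
  obtain ⟨v, -, hv⟩ := exists_max_image univ r (univ_nonempty_iff.2 hconn.nonempty)
  obtain ⟨W, hW⟩ := hconn.exists_walk_length_eq_dist u v
  have hW_card : #W.support.toFinset ≤ d + 1 :=
    calc #W.support.toFinset ≤ W.support.length := List.toFinset_card_le _
      _ = G.dist u v + 1 := by rw [W.length_support, hW]
      _ ≤ d + 1 := by gcongr; exact hdiam u v
  have hW_dom : ∀ w ≠ u, ∃ x ∈ W.support.toFinset, G.Adj x w := fun w hwu => by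
    simpa only [List.mem_toFinset] using W.exists_adj_mem_support_of_interval hlr hadj
      (fun w => hu w (mem_univ w)) (fun w => hv w (mem_univ w)) w hwu
  calc Fintype.card V ≤ #W.support.toFinset * Δ + 1 :=
        card_le_card_mul_add_one_of_forall_ne_exists_adj _ u hW_dom hdeg
    _ ≤ (d + 1) * Δ + 1 := by gcongr
end

section
/- Let G be a d-degenerate graph and let k ≥ d + 2. Then between any two proper k-colorings of G there exists a sequence of single-vertex recolorings, each intermediate coloring being a proper coloring with at most k colors, transforming one into the other. -/
open scoped Classical

namespace DegenRecolorAux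

variable {V : Type*} {k : ℕ}

def Proper (G : SimpleGraph V) (c : V → Fin k) : Prop :=
  ∀ ⦃v w⦄, G.Adj v w → c v ≠ c w

def Step (G : SimpleGraph V) (c c' : V → Fin k) : Prop :=
  Proper G c' ∧ ∃ v : V, ∀ w : V, w ≠ v → c' w = c w

def Conn (G : SimpleGraph V) : (V → Fin k) → (V → Fin k) → Prop :=
  Relation.ReflTransGen (Step G)

lemma proper_ext_iff {n : ℕ} (G : SimpleGraph (Fin (n+1))) (a : Fin n → Fin k) (c0 : Fin k) :
    Proper G (Fin.cases c0 a) ↔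
      ((∀ i j, G.Adj i.succ j.succ → a i ≠ a j) ∧ ∀ j, G.Adj 0 j.succ → c0 ≠ a j) := by
  constructor
  · intro h
    exact ⟨fun i j hij => by simpa using h hij, fun j hj => by simpa using h hj⟩
  · rintro ⟨h1, h2⟩ v w hvw
    induction v using Fin.cases with
    | zero =>
      induction w using Fin.cases with
      | zero => exact absurd hvw (G.loopless.irrefl _)
      | succ j => simpa using h2 j hvw
    | succ i =>
      induction w using Fin.cases with
      | zero => simpa using (h2 i hvw.symm).symm
      | succ j => simpa using h1 i j hvw

lemma conn_to_seq {G : SimpleGraph V} {α β : V → Fin k} (hα : Proper G α)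
    (h : Conn G α β) :
    ∃ (m : ℕ) (f : ℕ → V → Fin k), f 0 = α ∧ f m = β ∧
      (∀ i ≤ m, Proper G (f i)) ∧
      (∀ i < m, ∃ v, ∀ w, w ≠ v → f (i+1) w = f i w) := by
  induction h with
  | refl => exact ⟨0, fun _ => α, rfl, rfl, fun i _ => hα, fun i h => absurd h (by omega)⟩
  | @tail b c hab hbc ih =>
    obtain ⟨m, f, h0, hm, hp, hs⟩ := ih
    refine ⟨m + 1, fun i => if i ≤ m then f i else c, by simp [h0], by simp, ?_, ?_⟩
    · intro i hi
      by_cases h' : i ≤ m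
      · simpa [h'] using hp i h'
      · simpa [h'] using hbc.1
    · intro i hi
      by_cases h' : i < m
      · obtain ⟨v, hv⟩ := hs i h'
        exact ⟨v, fun w hw => by simpa [h'.le, Nat.succ_le_of_lt h'] using hv w hw⟩
      · have hi' : i = m := by omega
        subst hi'
        obtain ⟨v, hv⟩ := hbc.2
        exact ⟨v, fun w hw => by simpa [hm] using hv w hw⟩

lemma main (d : ℕ) (hk : d + 2 ≤ k) :
    ∀ n (G : SimpleGraph (Fin n)),
      (∀ i : Fin n, (Finset.univ.filter fun j => i < j ∧ G.Adj i j).card ≤ d) →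
      ∀ α β : Fin n → Fin k, Proper G α → Proper G β → Conn G α β := by
  intro n
  induction n with
  | zero =>
    intro G _ α β _ _
    have : α = β := funext fun i => i.elim0
    rw [this]
    exact Relation.ReflTransGen.refl
  | succ n ih =>
    intro G hdeg α β hα hβ
    set G' : SimpleGraph (Fin n) :=
      { Adj := fun i j => G.Adj i.succ j.succ
        symm := ⟨fun i j (h : G.Adj i.succ j.succ) => h.symm⟩
        loopless := ⟨fun i h => G.loopless.irrefl _ h⟩ } with hG'
    have hdeg' : ∀ i : Fin n,
        (Finset.univ.filter fun j => i < j ∧ G'.Adj i j).card ≤ d := by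
      intro i
      refine le_trans ?_ (hdeg i.succ)
      apply Finset.card_le_card_of_injOn Fin.succ
      · intro j hj
        simp only [Finset.mem_coe, Finset.mem_filter, Finset.mem_univ, true_and] at hj ⊢
        exact ⟨by simpa [Fin.succ_lt_succ_iff] using hj.1, hj.2⟩
      · exact fun a _ b _ hab => Fin.succ_injective _ hab
    -- the set of neighbors of vertex 0
    set N : Finset (Fin (n+1)) :=
      Finset.univ.filter (fun j => (0 : Fin (n+1)) < j ∧ G.Adj 0 j) with hN
    have hNcard : N.card ≤ d := hdeg 0
    have key : ∀ a' b' : Fin n → Fin k, Conn G' a' b' →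
        ∀ c0 : Fin k, Proper G (Fin.cases c0 a') →
        ∃ c1 : Fin k, Proper G (Fin.cases c1 b') ∧
          Conn G (Fin.cases c0 a') (Fin.cases c1 b') := by
      intro a' b' h
      induction h using Relation.ReflTransGen.head_induction_on with
      | refl => exact fun c0 hc0 => ⟨c0, hc0, Relation.ReflTransGen.refl⟩
      | @head a' m' hab _ ih2 =>
        intro c0 hc0
        obtain ⟨hm'proper, v', hv'⟩ := hab
        -- choose a new color x for vertex 0
        set S : Finset (Fin k) := N.image (Fin.cases c0 a') ∪ {m' v'} with hS
        have hScard : S.card ≤ d + 1 := by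
          refine le_trans (Finset.card_union_le _ _) ?_
          have := Finset.card_image_le (s := N) (f := Fin.cases c0 a')
          simp only [Finset.card_singleton]
          omega
        obtain ⟨x, hx⟩ : ∃ x : Fin k, x ∉ S := by
          by_contra hcon
          push_neg at hcon
          have h1 : (Finset.univ : Finset (Fin k)).card ≤ S.card :=
            Finset.card_le_card (fun y _ => hcon y)
          simp only [Finset.card_univ, Fintype.card_fin] at h1
          omega
        have hxN : ∀ j : Fin (n+1), j ∈ N → x ≠ (Fin.cases c0 a' : Fin (n+1) → Fin k) j := by
          intro j hj heq
          exact hx (Finset.mem_union_left _ (Finset.mem_image.2 ⟨j, hj, heq.symm⟩))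
        have hxv : x ≠ m' v' := fun heq =>
          hx (Finset.mem_union_right _ (by simp [heq]))
        have hmemN : ∀ j : Fin n, G.Adj 0 j.succ → j.succ ∈ N := by
          intro j hj
          simp only [hN, Finset.mem_filter, Finset.mem_univ, true_and]
          exact ⟨Fin.succ_pos j, hj⟩
        obtain ⟨ha1, ha2⟩ := (proper_ext_iff G a' c0).1 hc0
        -- step 1 : recolor vertex 0 to x
        have hp1 : Proper G (Fin.cases x a') := by
          refine (proper_ext_iff G a' x).2 ⟨ha1, fun j hj => ?_⟩
          simpa using hxN j.succ (hmemN j hj)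
        have hstep1 : Step G (Fin.cases c0 a') (Fin.cases x a') := by
          refine ⟨hp1, 0, fun w hw => ?_⟩
          induction w using Fin.cases with
          | zero => exact absurd rfl hw
          | succ j => simp
        -- step 2 : recolor vertex v'.succ
        have hp2 : Proper G (Fin.cases x m') := by
          refine (proper_ext_iff G m' x).2 ⟨fun i j hij => hm'proper hij, fun j hj => ?_⟩
          by_cases hjv : j = v'
          · rw [hjv]; exact hxv
          · rw [hv' j hjv]
            simpa using hxN j.succ (hmemN j hj)
        have hstep2 : Step G (Fin.cases x a') (Fin.cases x m') := by
          refine ⟨hp2, v'.succ, fun w hw => ?_⟩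
          induction w using Fin.cases with
          | zero => simp
          | succ j =>
            have : j ≠ v' := fun hj => hw (by rw [hj])
            simp [hv' j this]
        obtain ⟨c1, hpc1, hconn⟩ := ih2 x hp2
        exact ⟨c1, hpc1, Relation.ReflTransGen.head hstep1
          (Relation.ReflTransGen.head hstep2 hconn)⟩
    have hα' : Proper G' (fun j => α j.succ) := fun i j hij => hα hij
    have hβ' : Proper G' (fun j => β j.succ) := fun i j hij => hβ hij
    have hconn' : Conn G' (fun j => α j.succ) (fun j => β j.succ) :=
      ih G' hdeg' _ _ hα' hβ'
    have hα_eq : (Fin.cases (α 0) (fun j => α j.succ) : Fin (n+1) → Fin k) = α := by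
      funext v
      induction v using Fin.cases <;> simp
    obtain ⟨c1, hpc1, hcc⟩ := key _ _ hconn' (α 0) (by rw [hα_eq]; exact hα)
    have hlast : Step G (Fin.cases c1 (fun j => β j.succ)) β := by
      refine ⟨hβ, 0, fun w hw => ?_⟩
      induction w using Fin.cases with
      | zero => exact absurd rfl hw
      | succ j => simp
    have : Conn G (Fin.cases (α 0) (fun j => α j.succ)) β :=
      hcc.tail hlast
    rwa [hα_eq] at this

def pull {V : Type*} (G : SimpleGraph V) {n : ℕ} (e : Fin n ≃ V) : SimpleGraph (Fin n) where
  Adj i j := G.Adj (e i) (e j)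
  symm := ⟨fun i j (h : G.Adj (e i) (e j)) => h.symm⟩
  loopless := ⟨fun i h => G.loopless.irrefl _ h⟩

lemma final {V : Type*} (G : SimpleGraph V) (d k n : ℕ) (hk : d + 2 ≤ k) (e : Fin n ≃ V)
    (he : ∀ i : Fin n, (Finset.univ.filter fun j => i < j ∧ G.Adj (e i) (e j)).card ≤ d)
    (α β : V → Fin k) (hα : Proper G α) (hβ : Proper G β) : Conn G α β := by
  have hα0 : Proper (pull G e) (α ∘ e) := fun i j hij => hα hij
  have hβ0 : Proper (pull G e) (β ∘ e) := fun i j hij => hβ hij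
  have he' : ∀ i : Fin n, (Finset.univ.filter fun j => i < j ∧ (pull G e).Adj i j).card ≤ d :=
    fun i => he i
  have hconn0 : Conn (pull G e) (α ∘ e) (β ∘ e) :=
    main d hk n (pull G e) he' _ _ hα0 hβ0
  have hlift : Conn G ((α ∘ e) ∘ e.symm) ((β ∘ e) ∘ e.symm) := by
    refine Relation.ReflTransGen.lift (fun c => c ∘ e.symm) ?_ _ _ hconn0
    rintro a b ⟨hb, v, hv⟩
    refine ⟨?_, e v, fun w hw => ?_⟩
    · intro x y hxy
      have hadj : (pull G e).Adj (e.symm x) (e.symm y) := by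
        show G.Adj (e (e.symm x)) (e (e.symm y))
        simpa using hxy
      exact hb hadj
    · have hne : e.symm w ≠ v := fun h => hw (by rw [← h, e.apply_symm_apply])
      simpa using hv (e.symm w) hne
  have hcomp : ∀ c : V → Fin k, (c ∘ e) ∘ e.symm = c := by
    intro c; funext w; simp
  rwa [hcomp α, hcomp β] at hlift

end DegenRecolorAux

/-- For a d-degenerate graph and k ≥ d+2, any two proper k-colorings are connected by
a sequence of single-vertex recolorings, each intermediate coloring being proper. -/
theorem degenerate_recoloring_connected {V : Type*} [Fintype V] (G : SimpleGraph V)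
    (d : ℕ)
    (hdegen : ∃ e : Fin (Fintype.card V) ≃ V,
      ∀ i : Fin (Fintype.card V),
        (Finset.univ.filter fun j : Fin (Fintype.card V) =>
          i < j ∧ G.Adj (e i) (e j)).card ≤ d)
    (k : ℕ) (hk : d + 2 ≤ k)
    (α β : V → Fin k)
    (hα : ∀ ⦃v w⦄, G.Adj v w → α v ≠ α w)
    (hβ : ∀ ⦃v w⦄, G.Adj v w → β v ≠ β w) :
    ∃ (m : ℕ) (f : ℕ → V → Fin k),
      f 0 = α ∧ f m = β ∧
      (∀ i ≤ m, ∀ ⦃v w⦄, G.Adj v w → f i v ≠ f i w) ∧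
      (∀ i < m, ∃ v : V, ∀ w : V, w ≠ v → f (i + 1) w = f i w) := by
  obtain ⟨e, he⟩ := hdegen
  exact DegenRecolorAux.conn_to_seq hα
    (DegenRecolorAux.final G d k (Fintype.card V) hk e he α β hα hβ)
end

section
/- Let G be the (ω−1)-th power of a path on n vertices colored by assigning vertex vᵢ the color i mod (2ω−1). This is a proper (2ω−1)-coloring in which every vertex vᵢ with ω ≤ i ≤ n−ω+1 is frozen: no single-vertex recoloring step (changing the color of exactly one vertex while keeping the coloring proper with the same 2ω−1 colors) can change the color of vᵢ without first changing a neighbor's color; in fact, each such vᵢ sees all other 2ω−2 colors on its neighborhood. -/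
/-!
Two vertices at distance at most `ω - 1 < 2ω - 1` lie in different residue classes modulo
`2ω - 1`, so the coloring is proper. Conversely, the closed neighbourhood of a vertex at least
`ω - 1` away from both ends is a window of `2ω - 1` consecutive integers, which meets every
residue class.
-/

theorem Nat.mod_ne_mod_of_ne_of_le_add {a b k m : ℕ} (hne : a ≠ b) (hab : a ≤ b + k)
    (hba : b ≤ a + k) (hk : k < m) : a % m ≠ b % m := by
  intro h
  rcases hne.lt_or_gt with hlt | hlt
  · have := Nat.ModEq.add_le_of_lt h hlt
    omega
  · have := Nat.ModEq.add_le_of_lt h.symm hlt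
    omega

theorem Nat.exists_mem_Ico_mod_eq (a : ℕ) {m r : ℕ} (hr : r < m) :
    ∃ j, a ≤ j ∧ j < a + m ∧ j % m = r := by
  have hm : 0 < m := by omega
  have hlt := Nat.mod_lt (r + m - a % m) hm
  refine ⟨a + (r + m - a % m) % m, by omega, by omega, ?_⟩
  have hsplit : a + (r + m - a % m) = m * (a / m + 1) + r := by
    have := Nat.div_add_mod a m
    have := Nat.mod_lt a hm
    rw [Nat.mul_add_one]
    omega
  rw [Nat.add_mod_mod, hsplit, Nat.mul_add_mod, Nat.mod_eq_of_lt hr]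

/-- In the (ω−1)-th power of a path colored periodically with 2ω−1 colors, the coloring
is proper and every vertex far enough from both ends is frozen: all other 2ω−2 colors
of the palette appear in its neighborhood. -/
theorem power_path_frozen_coloring {n ω : ℕ} (hω : 2 ≤ ω)
    (G : SimpleGraph (Fin n))
    (hadj : ∀ i j : Fin n, G.Adj i j ↔
      i ≠ j ∧ (i : ℕ) ≤ (j : ℕ) + (ω - 1) ∧ (j : ℕ) ≤ (i : ℕ) + (ω - 1))
    (c : Fin n → ℕ) (hc : ∀ i : Fin n, c i = (i : ℕ) % (2 * ω - 1)) :
    (∀ ⦃i j : Fin n⦄, G.Adj i j → c i ≠ c j) ∧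
    (∀ i : Fin n, ω - 1 ≤ (i : ℕ) → (i : ℕ) ≤ n - ω →
      ∀ col < 2 * ω - 1, col ≠ c i → ∃ j : Fin n, G.Adj i j ∧ c j = col) := by
  constructor
  · intro i j hij
    obtain ⟨hne, hij, hji⟩ := (hadj i j).1 hij
    rw [hc, hc]
    exact Nat.mod_ne_mod_of_ne_of_le_add (Fin.val_injective.ne hne) hij hji (by omega)
  · intro i hlo hhi col hcol hne
    obtain ⟨j, hj, hj', hjcol⟩ := Nat.exists_mem_Ico_mod_eq (i - (ω - 1)) hcol
    have hjn : j < n := by omega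
    refine ⟨⟨j, hjn⟩, (hadj _ _).2 ⟨?_, ?_, ?_⟩, by rw [hc, hjcol]⟩
    · rintro rfl
      exact hne (by rw [hc, hjcol])
    all_goals dsimp only; omega
end
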